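/- arXiv:1304.4698 — 4 statements merged into one kernel-verified Lean document; each statement's English description precedes it below -/
import Mathlib

section
/- Let M be an n×n idempotent matrix with non-negative integer entries (that is, M has entries in ℕ and M² = M). Then there exists a permutation matrix S of size n, natural numbers a, b, c with a + b + c = n, and matrices A of size a×b and B of size b×c with non-negative integer entries, such that S⁻¹MS is the 3×3 block matrix with rows of blocks (0_a, A, AB), (0, 1_b, B), (0, 0, 0_c), where 0_a and 0_c denote zero square blocks of sizes a and c, and 1_b denotes the identity block of size b. -/
/-!
Write `i → j` for `M i j ≠ 0`. Over `ℕ`, `M = M * M` gives `M i k * M k j ≤ M i j`: so `→` is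
transitive, diagonal entries are `0` or `1`, and distinct indices with diagonal entry `1` are not
linked. Following an edge `u → v` back through indices without a loop (this terminates, since on
them `→` is a strict order) yields a looped `k` with `u → k → v`. Hence an unlooped `i` cannot
have both an incoming and an outgoing edge, as that would give looped `j → i → k` with `j ≠ k`.
Listing first the unlooped indices with nonzero row (their columns vanish), then the looped ones,
then those with zero row, puts `M` in block form; the corner block is `A * B` because `M = M * M`.
-/

open Matrix Finset

namespace IsIdempotentElem

section NatMatrix

variable {ι : Type*} [Fintype ι] {M : Matrix ι ι ℕ}

theorem mul_apply_le (hM : IsIdempotentElem M) (i k j : ι) : M i k * M k j ≤ M i j :=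
  calc M i k * M k j ≤ ∑ l, M i l * M l j :=
        single_le_sum (f := fun l => M i l * M l j) (fun _ _ => Nat.zero_le _) (mem_univ k)
    _ = M i j := by rw [← mul_apply, hM.eq]

theorem apply_ne_zero_trans (hM : IsIdempotentElem M) {i k j : ι} (hik : M i k ≠ 0)
    (hkj : M k j ≠ 0) : M i j ≠ 0 :=
  Nat.pos_iff_ne_zero.mp <|
    (Nat.mul_pos (Nat.pos_of_ne_zero hik) (Nat.pos_of_ne_zero hkj)).trans_le (hM.mul_apply_le i k j)

theorem diag_le_one (hM : IsIdempotentElem M) (i : ι) : M i i ≤ 1 := by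
  have := hM.mul_apply_le i i i
  nlinarith

theorem apply_eq_zero_of_diag_ne_zero (hM : IsIdempotentElem M) {i j : ι} (hij : i ≠ j)
    (hi : M i i ≠ 0) (hj : M j j ≠ 0) : M i j = 0 := by
  have h : M i i * M i j + M i j * M j j ≤ M i j :=
    calc _ ≤ ∑ l, M i l * M l j :=
          add_le_sum (f := fun l => M i l * M l j) (fun _ _ => Nat.zero_le _)
            (mem_univ i) (mem_univ j) hij
      _ = M i j := by rw [← mul_apply, hM.eq]
  have hi1 : M i j ≤ M i i * M i j := Nat.le_mul_of_pos_left _ (Nat.pos_of_ne_zero hi)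
  have hj1 : M i j ≤ M i j * M j j := Nat.le_mul_of_pos_right _ (Nat.pos_of_ne_zero hj)
  omega

theorem submatrix_eq_one {β : Type*} [DecidableEq β] (hM : IsIdempotentElem M) {f : β → ι}
    (hf : Function.Injective f) (hdiag : ∀ x, M (f x) (f x) ≠ 0) : M.submatrix f f = 1 := by
  ext x y
  rcases eq_or_ne x y with rfl | hxy
  · simpa using le_antisymm (hM.diag_le_one _) (Nat.pos_of_ne_zero (hdiag x))
  · simpa [one_apply_ne hxy] using
      hM.apply_eq_zero_of_diag_ne_zero (hf.ne hxy) (hdiag x) (hdiag y)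

theorem exists_diag_ne_zero_of_apply_ne_zero (hM : IsIdempotentElem M) {u v : ι}
    (huv : M u v ≠ 0) : ∃ k, M k k ≠ 0 ∧ M u k ≠ 0 ∧ M k v ≠ 0 := by
  let r : ι → ι → Prop := fun k v => M k v ≠ 0 ∧ M k k = 0
  have : IsTrans ι r := ⟨fun _ _ _ hab hbc => ⟨hM.apply_ne_zero_trans hab.1 hbc.1, hab.2⟩⟩
  have : Std.Irrefl r := ⟨fun _ h => h.1 h.2⟩
  induction v using (Finite.wellFounded_of_trans_of_irrefl r).induction generalizing u with
  | _ v ih =>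
  rw [← hM.eq, mul_apply] at huv
  obtain ⟨k, -, hk⟩ := exists_ne_zero_of_sum_ne_zero huv
  obtain ⟨huk, hkv⟩ := mul_ne_zero_iff.mp hk
  by_cases hkk : M k k = 0
  · obtain ⟨l, hll, hul, hlk⟩ := ih k ⟨hkv, hkk⟩ huk
    exact ⟨l, hll, hul, hM.apply_ne_zero_trans hlk hkv⟩
  · exact ⟨k, hkk, huk, hkv⟩

theorem col_eq_zero_or_row_eq_zero (hM : IsIdempotentElem M) {i : ι} (hi : M i i = 0) :
    (∀ u, M u i = 0) ∨ ∀ v, M i v = 0 := by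
  by_contra! ⟨⟨u, hu⟩, v, hv⟩
  obtain ⟨j, hjj, -, hji⟩ := hM.exists_diag_ne_zero_of_apply_ne_zero hu
  obtain ⟨k, hkk, hik, -⟩ := hM.exists_diag_ne_zero_of_apply_ne_zero hv
  have hjk : j ≠ k := by
    rintro rfl
    exact hM.apply_ne_zero_trans hik hji hi
  exact hM.apply_ne_zero_trans hji hik (hM.apply_eq_zero_of_diag_ne_zero hjk hjj hkk)

end NatMatrix

theorem eq_fromBlocks {α β γ R : Type*} [Fintype α] [Fintype β] [Fintype γ] [DecidableEq β]
    [NonAssocSemiring R] {N : Matrix (α ⊕ β ⊕ γ) (α ⊕ β ⊕ γ) R} (hN : IsIdempotentElem N)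
    (hα : ∀ i x, N i (.inl x) = 0)
    (hβ : N.submatrix (Sum.inr ∘ Sum.inl) (Sum.inr ∘ Sum.inl) = 1)
    (hγ : ∀ z j, N (.inr (.inr z)) j = 0) :
    N = fromBlocks 0 (fromCols (N.submatrix Sum.inl (Sum.inr ∘ Sum.inl))
        (N.submatrix Sum.inl (Sum.inr ∘ Sum.inl) *
          N.submatrix (Sum.inr ∘ Sum.inl) (Sum.inr ∘ Sum.inr)))
      0 (fromBlocks 1 (N.submatrix (Sum.inr ∘ Sum.inl) (Sum.inr ∘ Sum.inr)) 0 0) := by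
  ext (x | y | z) (x' | y' | z')
  case inl.inr.inr =>
    conv_lhs => rw [← hN.eq]
    simp [mul_apply, Fintype.sum_sum_type, hα, hγ]
  all_goals simp [hα, hγ, ← hβ]

end IsIdempotentElem

theorem Fintype.exists_equiv_fin_sum_sum {ι : Type*} [Fintype ι] (p q : ι → Prop)
    [DecidablePred p] [DecidablePred q] :
    ∃ (a b c : ℕ) (_ : a + b + c = Fintype.card ι) (e : ι ≃ Fin a ⊕ (Fin b ⊕ Fin c)),
      (∀ x, p (e.symm (.inl x))) ∧
        (∀ y, ¬p (e.symm (.inr (.inl y))) ∧ q (e.symm (.inr (.inl y)))) ∧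
        ∀ z, ¬p (e.symm (.inr (.inr z))) ∧ ¬q (e.symm (.inr (.inr z))) := by
  let e : ι ≃ _ := (Equiv.sumCompl p).symm.trans <|
    Equiv.sumCongr (Fintype.equivFin _) <|
      (Equiv.sumCompl fun i : {i // ¬p i} => q i).symm.trans <|
        Equiv.sumCongr (Fintype.equivFin _) (Fintype.equivFin _)
  refine ⟨_, _, _, ?_, e, fun x => ?_, fun y => ?_, fun z => ?_⟩
  · simpa [add_assoc] using (Fintype.card_congr e).symm
  · exact ((Fintype.equivFin _).symm x).2
  · exact ⟨((Fintype.equivFin _).symm y).1.2, ((Fintype.equivFin _).symm y).2⟩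
  · exact ⟨((Fintype.equivFin _).symm z).1.2, ((Fintype.equivFin _).symm z).2⟩

/-- **Flor's theorem on idempotent matrices with non-negative integer entries.**
If `M` is an `n × n` matrix over `ℕ` with `M² = M`, then after simultaneously permuting the
rows and columns (i.e. conjugating by a permutation matrix) `M` takes the `3 × 3` block form
`(0 A AB; 0 1 B; 0 0 0)` for some natural-number matrices `A` and `B`, where the diagonal
blocks are square of sizes `a`, `b`, `c` with `a + b + c = n`. -/
theorem idempotent_nat_matrix_block_form
    (n : ℕ) (M : Matrix (Fin n) (Fin n) ℕ) (hM : M * M = M) :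
    ∃ (a b c : ℕ) (_ : a + b + c = n)
      (A : Matrix (Fin a) (Fin b) ℕ) (B : Matrix (Fin b) (Fin c) ℕ)
      (e : Fin n ≃ (Fin a ⊕ (Fin b ⊕ Fin c))),
      M.submatrix e.symm e.symm =
        Matrix.fromBlocks 0 (Matrix.fromCols A (A * B)) 0
          (Matrix.fromBlocks 1 B 0 0) := by
  classical
  have hM' : IsIdempotentElem M := hM
  obtain ⟨a, b, c, hcard, e, hα, hβ, hγ⟩ := Fintype.exists_equiv_fin_sum_sum
    (fun i => M i i = 0 ∧ ∃ v, M i v ≠ 0) (fun i => M i i ≠ 0)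
  refine ⟨a, b, c, by simpa using hcard, _, _, e, IsIdempotentElem.eq_fromBlocks ?_ ?_ ?_ ?_⟩
  · rw [IsIdempotentElem, submatrix_mul_equiv, hM]
  · intro i x
    obtain ⟨hx, v, hv⟩ := hα x
    exact (hM'.col_eq_zero_or_row_eq_zero hx).resolve_right (fun h => hv (h v)) _
  · rw [submatrix_submatrix]
    exact hM'.submatrix_eq_one (e.symm.injective.comp (Sum.inr_injective.comp Sum.inl_injective))
      fun y => (hβ y).2
  · intro z j
    obtain ⟨hp, hq⟩ := hγ z
    by_contra hj
    exact hp ⟨not_not.mp hq, _, hj⟩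
end

section
/- Let M be a nonzero square idempotent matrix with non-negative integer entries (M² = M). Then every diagonal entry of M equals 0 or 1, and at least one diagonal entry of M equals 1. -/
/-- If `M` is a nonzero square idempotent matrix with non-negative integer entries
(`M² = M`), then every diagonal entry of `M` equals `0` or `1`, and at least one diagonal
entry equals `1`. -/
theorem idempotent_nat_matrix_diagonal
    (n : ℕ) (M : Matrix (Fin n) (Fin n) ℕ) (hM : M * M = M) (hM0 : M ≠ 0) :
    (∀ i, M i i = 0 ∨ M i i = 1) ∧ ∃ i, M i i = 1 := by
  -- diagonal entries are ≤ 1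
  have hdiag : ∀ i, M i i ≤ 1 := by
    intro i
    have h1 : M i i * M i i ≤ M i i := by
      conv_rhs => rw [← hM]
      rw [Matrix.mul_apply]
      exact Finset.single_le_sum (f := fun j => M i j * M j i)
        (fun k _ => Nat.zero_le _) (Finset.mem_univ i)
    by_contra h
    push_neg at h
    have : M i i * 2 ≤ M i i * M i i := Nat.mul_le_mul_left _ h
    omega
  -- splitting lemma: a nonzero entry factors through some k
  have hsplit : ∀ a b : Fin n, M a b ≠ 0 → ∃ k, M a k ≠ 0 ∧ M k b ≠ 0 := by
    intro a b hab
    rw [← hM, Matrix.mul_apply] at hab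
    obtain ⟨k, _, hk⟩ := Finset.exists_ne_zero_of_sum_ne_zero hab
    exact ⟨k, fun h => hk (by simp [h]), fun h => hk (by simp [h])⟩
  -- M^(m+1) = M
  have hpow : ∀ m : ℕ, M ^ (m + 1) = M := by
    intro m
    induction m with
    | zero => simp
    | succ m ih => rw [pow_succ, ih, hM]
  -- get a nonzero entry
  obtain ⟨a0, b0, hab0⟩ : ∃ a b, M a b ≠ 0 := by
    by_contra h
    push_neg at h
    exact hM0 (by ext a b; simp [h a b])
  -- build infinite walk
  have key : ∃ t : ℕ → Fin n, ∀ k, M (t k) (t (k + 1)) ≠ 0 := by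
    let s : ℕ → {p : Fin n × Fin n // M p.1 p.2 ≠ 0 ∧ M p.2 b0 ≠ 0} := fun m =>
      Nat.rec
        (⟨(a0, (hsplit a0 b0 hab0).choose),
          (hsplit a0 b0 hab0).choose_spec.1, (hsplit a0 b0 hab0).choose_spec.2⟩)
        (fun _ prev =>
          ⟨(prev.1.2, (hsplit prev.1.2 b0 prev.2.2).choose),
            (hsplit prev.1.2 b0 prev.2.2).choose_spec.1,
            (hsplit prev.1.2 b0 prev.2.2).choose_spec.2⟩) m
    refine ⟨fun k => (s k).1.1, fun k => ?_⟩
    exact (s k).2.1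
  obtain ⟨t, ht⟩ := key
  -- walks give nonzero powers
  have hwalk : ∀ m a : ℕ, (M ^ (m + 1)) (t a) (t (a + m + 1)) ≠ 0 := by
    intro m
    induction m with
    | zero => intro a; simpa using ht a
    | succ m ih =>
      intro a
      have h1 : (M ^ (m + 1)) (t a) (t (a + m + 1)) * M (t (a + m + 1)) (t (a + m + 2)) ≠ 0 :=
        Nat.mul_ne_zero (ih a) (ht (a + m + 1))
      have h2 : (M ^ (m + 1)) (t a) (t (a + m + 1)) * M (t (a + m + 1)) (t (a + m + 2))
          ≤ (M ^ (m + 2)) (t a) (t (a + m + 2)) := by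
        conv_rhs => rw [pow_succ, Matrix.mul_apply]
        exact Finset.single_le_sum
          (f := fun k => (M ^ (m + 1)) (t a) k * M k (t (a + m + 2)))
          (fun k _ => Nat.zero_le _) (Finset.mem_univ (t (a + m + 1)))
      have : (M ^ (m + 2)) (t a) (t (a + m + 2)) ≠ 0 := fun h => h1 (by omega)
      have heq : a + (m + 1) + 1 = a + m + 2 := by omega
      rw [heq]
      exact this
  -- pigeonhole: find a cycle
  obtain ⟨p, q, hpq, heq⟩ := Finite.exists_ne_map_eq_of_infinite t
  wlog hlt : p < q generalizing p q
  · exact this q p hpq.symm heq.symm (by omega)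
  have hm : q = p + (q - p - 1) + 1 := by omega
  have := hwalk (q - p - 1) p
  rw [← hm, ← heq, hpow] at this
  refine ⟨fun i => by have := hdiag i; omega, ⟨t p, ?_⟩⟩
  have := hdiag (t p)
  omega
end

section
/- Let M be an n×n idempotent matrix with non-negative integer entries (M² = M) and let i be an index with M_{ii} ≥ 1. Then M_{ii} = 1, and for every index j ≠ i with M_{ij} > 0, the entire j-th row of M is zero (that is, M_{jk} = 0 for all k). -/
/-- Let `M` be an `n × n` idempotent matrix with non-negative integer entries (`M² = M`) and
let `i` be an index with `M i i ≥ 1`.  Then `M i i = 1`, and for every index `j ≠ i` with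
`M i j > 0`, the entire `j`-th row of `M` is zero. -/
theorem idempotent_nat_matrix_row_zero
    (n : ℕ) (M : Matrix (Fin n) (Fin n) ℕ) (hM : M * M = M)
    (i : Fin n) (hi : 1 ≤ M i i) :
    M i i = 1 ∧ ∀ j, j ≠ i → 0 < M i j → ∀ l, M j l = 0 := by
  have key : ∀ l, ∑ k, M i k * M k l = M i l := by
    intro l
    have := congrFun (congrFun hM i) l
    simpa [Matrix.mul_apply] using this
  have hii : M i i = 1 := by
    have h1 : M i i * M i i ≤ ∑ k, M i k * M k i :=
      Finset.single_le_sum (f := fun k => M i k * M k i) (fun k _ => Nat.zero_le _) (Finset.mem_univ i)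
    rw [key i] at h1
    nlinarith
  refine ⟨hii, fun j hj hij l => ?_⟩
  have h2 : M i i * M i l + M i j * M j l ≤ ∑ k, M i k * M k l := by
    rw [← Finset.sum_pair (f := fun k => M i k * M k l) (show i ≠ j from fun h => hj h.symm)]
    exact Finset.sum_le_sum_of_subset (Finset.subset_univ _)
  rw [key l, hii, one_mul] at h2
  have : M i j * M j l = 0 := by omega
  rcases Nat.mul_eq_zero.1 this with h | h
  · omega
  · exact h
end

section
/- Let M be an n×n idempotent matrix with non-negative integer entries (M² = M), and let N be an n×n matrix with non-negative integer entries such that N_{ij} ≤ M_{ij} for all indices i, j and all diagonal entries of N are zero. Then N³ = 0. -/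
section aux

variable {n : ℕ} {M : Matrix (Fin n) (Fin n) ℕ}

private lemma mat_key (hM : M * M = M) {u t v : Fin n}
    (h1 : 0 < M u t) (h2 : 0 < M t v) : 0 < M u v := by
  have hsum : ∑ s, M u s * M s v = M u v := by
    have := congrFun (congrFun hM u) v
    rwa [Matrix.mul_apply] at this
  calc (0:ℕ) < M u t * M t v := Nat.mul_pos h1 h2
    _ ≤ ∑ s, M u s * M s v :=
        Finset.single_le_sum (f := fun s => M u s * M s v)
          (fun s _ => Nat.zero_le _) (Finset.mem_univ t)
    _ = M u v := hsum

private lemma mat_diag_zero (hM : M * M = M) {u w v : Fin n}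
    (hw1 : w ≠ u) (hw2 : w ≠ v) (h1 : 0 < M u w) (h2 : 0 < M w v) :
    M u u = 0 ∧ M v v = 0 := by
  have hsum : ∑ s, M u s * M s v = M u v := by
    have := congrFun (congrFun hM u) v
    rwa [Matrix.mul_apply] at this
  have hpos : 0 < M u w * M w v := Nat.mul_pos h1 h2
  have huv : 0 < M u v := mat_key hM h1 h2
  have hA : M u u * M u v + M u w * M w v ≤ M u v := by
    have h : (∑ s ∈ ({u, w} : Finset (Fin n)), M u s * M s v) ≤ ∑ s, M u s * M s v :=
      Finset.sum_le_sum_of_subset (Finset.subset_univ _)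
    rw [Finset.sum_pair (show u ≠ w from Ne.symm hw1)] at h
    omega
  have hB : M u w * M w v + M u v * M v v ≤ M u v := by
    have h : (∑ s ∈ ({w, v} : Finset (Fin n)), M u s * M s v) ≤ ∑ s, M u s * M s v :=
      Finset.sum_le_sum_of_subset (Finset.subset_univ _)
    rw [Finset.sum_pair (show w ≠ v from hw2)] at h
    omega
  constructor
  · by_contra h
    have h1' : 1 ≤ M u u := Nat.pos_of_ne_zero h
    nlinarith
  · by_contra h
    have h1' : 1 ≤ M v v := Nat.pos_of_ne_zero h
    nlinarith

private lemma mat_loop_exists (hM : M * M = M) :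
    ∀ v u : Fin n, 0 < M u v → ∃ w, 0 < M u w ∧ 0 < M w v ∧ 0 < M w w := by
  set r : Fin n → Fin n → Prop := fun a b => 0 < M a b ∧ M a a = 0 ∧ M b b = 0 with hr
  have htg : ∀ x y, Relation.TransGen r x y → 0 < M x y := by
    intro x y h
    induction h with
    | single h => exact h.1
    | tail _ h ih => exact mat_key hM ih h.1
  haveI : IsTrans (Fin n) (Relation.TransGen r) :=
    ⟨fun _ _ _ => Relation.TransGen.trans⟩
  haveI : IsIrrefl (Fin n) (Relation.TransGen r) := by
    constructor
    intro x h
    have hx : M x x = 0 := by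
      cases h with
      | single h => exact h.2.1
      | tail _ h => exact h.2.2
    have := htg x x h
    omega
  have wf : WellFounded (Relation.TransGen r) :=
    Finite.wellFounded_of_trans_of_irrefl _
  intro v
  induction v using WellFounded.induction wf with
  | _ v ih =>
    intro u huv
    by_cases hvv : 0 < M v v
    · exact ⟨v, huv, hvv, hvv⟩
    have hvv0 : M v v = 0 := by omega
    have hsum : ∑ s, M u s * M s v = M u v := by
      have := congrFun (congrFun hM u) v
      rwa [Matrix.mul_apply] at this
    have hex : ∃ t, 0 < M u t ∧ 0 < M t v := by
      by_contra hc
      push_neg at hc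
      have hz : ∑ s, M u s * M s v = 0 := by
        apply Finset.sum_eq_zero
        intro s _
        rcases Nat.eq_zero_or_pos (M u s) with h | h
        · simp [h]
        · rcases Nat.eq_zero_or_pos (M s v) with h' | h'
          · simp [h']
          · simp [Nat.le_zero.mp (hc s h)]
      omega
    obtain ⟨t, hut, htv⟩ := hex
    by_cases htt : 0 < M t t
    · exact ⟨t, hut, htv, htt⟩
    have htt0 : M t t = 0 := by omega
    have hrtv : Relation.TransGen r t v := Relation.TransGen.single ⟨htv, htt0, hvv0⟩
    obtain ⟨w, h1, h2, h3⟩ := ih t hrtv u hut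
    exact ⟨w, h1, mat_key hM h2 htv, h3⟩

end aux

/-- Let `M` be an `n × n` idempotent matrix with non-negative integer entries (`M² = M`) and
let `N` be an `n × n` matrix over `ℕ` with `N ≤ M` entrywise whose diagonal entries are all
zero.  Then `N³ = 0`. -/
theorem subidempotent_offdiagonal_nat_matrix_cube_zero
    (n : ℕ) (M N : Matrix (Fin n) (Fin n) ℕ) (hM : M * M = M)
    (hNM : ∀ i j, N i j ≤ M i j) (hdiag : ∀ i, N i i = 0) :
    N ^ 3 = 0 := by
  ext i l
  rw [show (3:ℕ) = 2 + 1 from rfl, pow_succ, sq]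
  rw [Matrix.mul_apply]
  show ∑ k, (N * N) i k * N k l = 0
  apply Finset.sum_eq_zero
  intro k _
  rw [Matrix.mul_apply, Finset.sum_mul]
  apply Finset.sum_eq_zero
  intro j _
  by_contra hc
  have hij : 0 < N i j := Nat.pos_of_ne_zero (by intro h; exact hc (by simp [h]))
  have hjk : 0 < N j k := Nat.pos_of_ne_zero (by intro h; exact hc (by simp [h]))
  have hkl : 0 < N k l := Nat.pos_of_ne_zero (by intro h; exact hc (by simp [h]))
  have hij' : j ≠ i := by
    intro h; rw [h] at hij; rw [hdiag i] at hij; omega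
  have hjk' : j ≠ k := by
    intro h; rw [← h] at hjk; rw [hdiag j] at hjk; omega
  have hkl' : k ≠ l := by
    intro h; rw [h] at hkl; rw [hdiag l] at hkl; omega
  have a : 0 < M i j := lt_of_lt_of_le hij (hNM i j)
  have b : 0 < M j k := lt_of_lt_of_le hjk (hNM j k)
  have c : 0 < M k l := lt_of_lt_of_le hkl (hNM k l)
  obtain ⟨hii0, hkk0⟩ := mat_diag_zero hM hij' hjk' a b
  obtain ⟨hjj0, hll0⟩ := mat_diag_zero hM (Ne.symm hjk') hkl' b c
  obtain ⟨w, hjw, hwk, hww⟩ := mat_loop_exists hM k j b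
  have hjw' : j ≠ w := by
    intro h; rw [← h] at hww; omega
  have hww0 : M w w = 0 := (mat_diag_zero hM hij' hjw' a hjw).2
  omega
end
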